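/- For every integer r ≥ 2 and all reals d, δ > 0 there exists λ₀ > 0 such that for every λ ∈ (0, λ₀] there exist ε₀ > 0 and m₀ ∈ ℕ with the following property for all 0 < ε ≤ ε₀ and integers m ≥ m₀. Let R be a graph on vertex set [r] and let 𝓕 = (𝒱, 𝒞, 𝐆) be a semi-super R-template with parameters (m, ε, d, δ). Then for every ij ∈ E(R), the bipartite graph T^λ_𝓕[V_i, V_j] is (ε, d/2)-half-superregular, where T^λ_𝓕 is the λ-thick graph of 𝓕. -/
import Mathlib


open Finset
open scoped Classical

/-- Number of ordered pairs `(x,y) ∈ A × B` with `{x,y}` an edge of `G`. -/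
noncomputable def pairCount {V : Type*} (G : SimpleGraph V) (A B : Finset V) : ℕ :=
  ((A ×ˢ B).filter (fun p => G.Adj p.1 p.2)).card

/-- Number of neighbours of `v` in `B`. -/
noncomputable def degIn {V : Type*} (G : SimpleGraph V) (v : V) (B : Finset V) : ℕ :=
  (B.filter (fun w => G.Adj v w)).card

/-- Degree of `v` in `G`. -/
noncomputable def degOf {V : Type*} [Fintype V] (G : SimpleGraph V) (v : V) : ℕ :=
  ((univ : Finset V).filter (fun w => G.Adj v w)).card

/-- Number of edges of `G`. -/
noncomputable def edgeCnt {V : Type*} [Fintype V] (G : SimpleGraph V) : ℕ :=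
  ((univ : Finset (Sym2 V)).filter (fun e => e ∈ G.edgeSet)).card

/-- Number of edges of `H` with one endpoint in `A` and the other in `B`. -/
noncomputable def eBetween {W : Type*} [Fintype W] (H : SimpleGraph W) (A B : Finset W) : ℕ :=
  ((univ : Finset (Sym2 W)).filter
    (fun e => e ∈ H.edgeSet ∧ ∃ x ∈ A, ∃ y ∈ B, e = s(x, y))).card

/-- A graph `H` on `h` vertices is `μ`-separable if there is `X ⊆ V(H)` with `|X| ≤ μ h`
such that every connected component of `H - X` has at most `μ h` vertices. -/
def Separable {W : Type*} [Fintype W] (H : SimpleGraph W) (μ : ℝ) : Prop :=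
  ∃ X : Finset W, (X.card : ℝ) ≤ μ * (Fintype.card W : ℝ) ∧
    ∀ K : (SimpleGraph.induce ((↑X : Set W)ᶜ) H).ConnectedComponent,
      (K.supp.ncard : ℝ) ≤ μ * (Fintype.card W : ℝ)

/-- A transversal copy of `H` in the graph collection `G`. -/
def HasTransversal {V C W : Type*} (G : C → SimpleGraph V) (H : SimpleGraph W) : Prop :=
  ∃ (τ : W → V) (σ : Sym2 W → C),
    Function.Injective τ ∧ Set.InjOn σ H.edgeSet ∧
    ∀ x y, H.Adj x y → (G (σ s(x, y))).Adj (τ x) (τ y)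

/-- Density of a collection of bipartite graphs. -/
noncomputable def colDensity {V C : Type*} (G : C → SimpleGraph V)
    (A B : Finset V) (D : Finset C) : ℝ :=
  (∑ c ∈ D, (pairCount (G c) A B : ℝ)) / ((D.card : ℝ) * (A.card : ℝ) * (B.card : ℝ))

/-- `(ε,d)`-regularity of a collection of bipartite graphs with parts `V₁, V₂`
and colour set `D`. -/
def ColReg {V C : Type*} (ε d : ℝ) (G : C → SimpleGraph V)
    (V₁ V₂ : Finset V) (D : Finset C) : Prop :=
  d ≤ colDensity G V₁ V₂ D ∧
  ∀ V₁' ⊆ V₁, ∀ V₂' ⊆ V₂, ∀ D' ⊆ D,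
    ε * (V₁.card : ℝ) ≤ (V₁'.card : ℝ) → ε * (V₂.card : ℝ) ≤ (V₂'.card : ℝ) →
    ε * (D.card : ℝ) ≤ (D'.card : ℝ) →
    |colDensity G V₁' V₂' D' - colDensity G V₁ V₂ D| < ε

/-- `(ε,d)`-superregularity of a collection of bipartite graphs. -/
def ColSuperReg {V C : Type*} (ε d : ℝ) (G : C → SimpleGraph V)
    (V₁ V₂ : Finset V) (D : Finset C) : Prop :=
  ColReg ε d G V₁ V₂ D ∧
  (∀ v ∈ V₁, d * (V₂.card : ℝ) * (D.card : ℝ) ≤ ∑ c ∈ D, (degIn (G c) v V₂ : ℝ)) ∧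
  (∀ v ∈ V₂, d * (V₁.card : ℝ) * (D.card : ℝ) ≤ ∑ c ∈ D, (degIn (G c) v V₁ : ℝ)) ∧
  (∀ c ∈ D, d * (V₁.card : ℝ) * (V₂.card : ℝ) ≤ (pairCount (G c) V₁ V₂ : ℝ))

/-- `(ε,d)`-half-superregularity of a collection of bipartite graphs. -/
def ColHalfSuperReg {V C : Type*} (ε d : ℝ) (G : C → SimpleGraph V)
    (V₁ V₂ : Finset V) (D : Finset C) : Prop :=
  (∀ V₁' ⊆ V₁, ∀ V₂' ⊆ V₂, ∀ D' ⊆ D,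
    ε * (V₁.card : ℝ) ≤ (V₁'.card : ℝ) → ε * (V₂.card : ℝ) ≤ (V₂'.card : ℝ) →
    ε * (D.card : ℝ) ≤ (D'.card : ℝ) →
    d * (D'.card : ℝ) * (V₁'.card : ℝ) * (V₂'.card : ℝ) ≤
      ∑ c ∈ D', (pairCount (G c) V₁' V₂' : ℝ)) ∧
  (∀ v ∈ V₁, d * (V₂.card : ℝ) * (D.card : ℝ) ≤ ∑ c ∈ D, (degIn (G c) v V₂ : ℝ)) ∧
  (∀ v ∈ V₂, d * (V₁.card : ℝ) * (D.card : ℝ) ≤ ∑ c ∈ D, (degIn (G c) v V₁ : ℝ)) ∧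
  (∀ c ∈ D, d * (V₁.card : ℝ) * (V₂.card : ℝ) ≤ (pairCount (G c) V₁ V₂ : ℝ))

/-- `(ε,d)`-half-superregularity of a bipartite graph (given by an adjacency relation)
with parts `V₁, V₂`. -/
def BipHalfSuper {V : Type*} (ε d : ℝ) (A : V → V → Prop) (V₁ V₂ : Finset V) : Prop :=
  (∀ U₁ ⊆ V₁, ∀ U₂ ⊆ V₂,
    ε * (V₁.card : ℝ) ≤ (U₁.card : ℝ) → ε * (V₂.card : ℝ) ≤ (U₂.card : ℝ) →
    d * (U₁.card : ℝ) * (U₂.card : ℝ) ≤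
      (((U₁ ×ˢ U₂).filter (fun p => A p.1 p.2)).card : ℝ)) ∧
  (∀ x ∈ V₁, d * (V₂.card : ℝ) ≤ ((V₂.filter (fun y => A x y)).card : ℝ)) ∧
  (∀ y ∈ V₂, d * (V₁.card : ℝ) ≤ ((V₁.filter (fun x => A x y)).card : ℝ))

/-- Number of ordered triples `(x₁,x₂,x₃) ∈ U₁ × U₂ × U₃` with `{x₁,x₂,x₃}` an edge. -/
noncomputable def tripCount {V : Type*} (E : Set (Finset V)) (U₁ U₂ U₃ : Finset V) : ℕ :=
  ((U₁ ×ˢ U₂ ×ˢ U₃).filter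
    (fun p => ({p.1, p.2.1, p.2.2} : Finset V) ∈ E)).card

/-- Density of the triple `(U₁,U₂,U₃)` in a `3`-graph. -/
noncomputable def tripDensity {V : Type*} (E : Set (Finset V)) (U₁ U₂ U₃ : Finset V) : ℝ :=
  (tripCount E U₁ U₂ U₃ : ℝ) / ((U₁.card : ℝ) * (U₂.card : ℝ) * (U₃.card : ℝ))

/-- Degree of a vertex in a hypergraph: the number of edges containing it. -/
noncomputable def hDeg {V : Type*} [Fintype V] (E : Set (Finset V)) (v : V) : ℕ :=
  ((univ : Finset (Finset V)).filter (fun e => e ∈ E ∧ v ∈ e)).card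

/-- Weak `(ε,d)`-regularity of a 3-partite triple in a 3-graph. -/
def TripReg {V : Type*} (ε d : ℝ) (E : Set (Finset V)) (V₁ V₂ V₃ : Finset V) : Prop :=
  d ≤ tripDensity E V₁ V₂ V₃ ∧
  ∀ U₁ ⊆ V₁, ∀ U₂ ⊆ V₂, ∀ U₃ ⊆ V₃,
    ε * (V₁.card : ℝ) ≤ (U₁.card : ℝ) → ε * (V₂.card : ℝ) ≤ (U₂.card : ℝ) →
    ε * (V₃.card : ℝ) ≤ (U₃.card : ℝ) →
    |tripDensity E U₁ U₂ U₃ - tripDensity E V₁ V₂ V₃| < ε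

/-- Weak `(ε,d)`-half-superregularity of a 3-partite triple in a 3-graph. -/
def TripHalfSuper {V : Type*} (ε d : ℝ) (E : Set (Finset V)) (V₁ V₂ V₃ : Finset V) : Prop :=
  (∀ U₁ ⊆ V₁, ∀ U₂ ⊆ V₂, ∀ U₃ ⊆ V₃,
    ε * (V₁.card : ℝ) ≤ (U₁.card : ℝ) → ε * (V₂.card : ℝ) ≤ (U₂.card : ℝ) →
    ε * (V₃.card : ℝ) ≤ (U₃.card : ℝ) →
    d * (U₁.card : ℝ) * (U₂.card : ℝ) * (U₃.card : ℝ) ≤ (tripCount E U₁ U₂ U₃ : ℝ)) ∧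
  (∀ x ∈ V₁, d * (V₂.card : ℝ) * (V₃.card : ℝ) ≤ (tripCount E {x} V₂ V₃ : ℝ)) ∧
  (∀ y ∈ V₂, d * (V₁.card : ℝ) * (V₃.card : ℝ) ≤ (tripCount E V₁ {y} V₃ : ℝ)) ∧
  (∀ z ∈ V₃, d * (V₁.card : ℝ) * (V₂.card : ℝ) ≤ (tripCount E V₁ V₂ {z} : ℝ))

/-- A copy of the 1-expansion of `H` in a 3-graph with edge set `E`. -/
def HasExpansionCopy {V W : Type*} (E : Set (Finset V)) (H : SimpleGraph W) : Prop :=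
  ∃ (ρv : W → V) (ρe : Sym2 W → V),
    Function.Injective ρv ∧ Set.InjOn ρe H.edgeSet ∧
    (∀ x, ∀ e ∈ H.edgeSet, ρv x ≠ ρe e) ∧
    ∀ x y, H.Adj x y → ({ρv x, ρv y, ρe s(x, y)} : Finset V) ∈ E

/-- Number of edges (as functions picking one vertex per part) inside the sets `U i`. -/
noncomputable def kCount {V : Type*} {k : ℕ} (E : Set (Fin k → V)) (U : Fin k → Finset V) : ℕ :=
  ((Fintype.piFinset U).filter (fun e => e ∈ E)).card

/-- Density of a `k`-tuple in a `k`-partite `k`-graph. -/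
noncomputable def kDensity {V : Type*} {k : ℕ} (E : Set (Fin k → V)) (U : Fin k → Finset V) : ℝ :=
  (kCount E U : ℝ) / ∏ i, ((U i).card : ℝ)

/-- Degree of `x` as a vertex of the `i`-th part of a `k`-partite `k`-graph. -/
noncomputable def kDegAt {V : Type*} [Fintype V] {k : ℕ} (E : Set (Fin k → V))
    (i : Fin k) (x : V) : ℕ :=
  ((univ : Finset (Fin k → V)).filter (fun e => e ∈ E ∧ e i = x)).card

/-- Weak ε-regularity of a `k`-tuple in a `k`-partite `k`-graph. -/
def KTupleReg {V : Type*} {k : ℕ} (ε : ℝ) (E : Set (Fin k → V)) (Wp : Fin k → Finset V) : Prop :=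
  ∀ U : Fin k → Finset V, (∀ i, U i ⊆ Wp i) →
    (∀ i, ε * ((Wp i).card : ℝ) ≤ ((U i).card : ℝ)) →
    |kDensity E U - kDensity E Wp| < ε

/-- Weak `(ε,d)`-regularity of a `k`-partite `k`-graph with parts `P`. -/
def KReg {V : Type*} {k : ℕ} (ε d : ℝ) (E : Set (Fin k → V)) (P : Fin k → Finset V) : Prop :=
  d ≤ kDensity E P ∧
  ∀ U : Fin k → Finset V, (∀ i, U i ⊆ P i) →
    (∀ i, ε * ((P i).card : ℝ) ≤ ((U i).card : ℝ)) →
    |kDensity E U - kDensity E P| < ε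

/-- Weak `(ε,d)`-superregularity of a `k`-partite `k`-graph with parts `P`. -/
def KSuper {V : Type*} [Fintype V] {k : ℕ} (ε d : ℝ) (E : Set (Fin k → V))
    (P : Fin k → Finset V) : Prop :=
  KReg ε d E P ∧
  ∀ i, ∀ x ∈ P i, d * (∏ j, ((P j).card : ℝ)) / ((P i).card : ℝ) ≤ (kDegAt E i x : ℝ)

/-- Weak `(ε,d)`-half-superregularity of a `k`-partite `k`-graph with parts `P`. -/
def KHalfSuper {V : Type*} [Fintype V] {k : ℕ} (ε d : ℝ) (E : Set (Fin k → V))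
    (P : Fin k → Finset V) : Prop :=
  (∀ U : Fin k → Finset V, (∀ i, U i ⊆ P i) →
    (∀ i, ε * ((P i).card : ℝ) ≤ ((U i).card : ℝ)) →
    d ≤ kDensity E U) ∧
  ∀ i, ∀ x ∈ P i, d * (∏ j, ((P j).card : ℝ)) / ((P i).card : ℝ) ≤ (kDegAt E i x : ℝ)

/-- An `R`-template: vertex clusters `Vc`, colour clusters `Cc i j` (one for each
edge `ij` of `R`), and for each colour `c ∈ Cc i j` a bipartite graph `Ge c i j`
with parts `Vc i`, `Vc j`.  The graph `G_c` of the collection is the union of the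
`Ge c i j` over the edges `ij` of `R` whose colour cluster contains `c`. -/
structure GTemplate (V C : Type*) (r : ℕ) where
  R : SimpleGraph (Fin r)
  Vc : Fin r → Finset V
  Cc : Fin r → Fin r → Finset C
  Ge : C → Fin r → Fin r → SimpleGraph V
  Cc_symm : ∀ i j, Cc i j = Cc j i
  Ge_symm : ∀ c i j, Ge c i j = Ge c j i
  Vc_disj : ∀ i j, i ≠ j → Disjoint (Vc i) (Vc j)
  Cc_support : ∀ i j, ¬ R.Adj i j → Cc i j = ∅
  Ge_support : ∀ c i j, c ∉ Cc i j → Ge c i j = ⊥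
  Ge_bipartite : ∀ c i j x y, (Ge c i j).Adj x y →
    (x ∈ Vc i ∧ y ∈ Vc j) ∨ (x ∈ Vc j ∧ y ∈ Vc i)

namespace GTemplate

variable {V C : Type*} {r : ℕ}

/-- The graph `G_c` of the template: the union of the bipartite pieces. -/
noncomputable def Gc (T : GTemplate V C r) (c : C) : SimpleGraph V :=
  ⨆ i, ⨆ j, T.Ge c i j

/-- `T` is an `R`-template with parameters `(m, ε, d, δ)`. -/
def IsParam (T : GTemplate V C r) (m ε d δ : ℝ) : Prop :=
  (∀ j, m ≤ ((T.Vc j).card : ℝ) ∧ ((T.Vc j).card : ℝ) ≤ m / δ) ∧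
  (∀ i j, T.R.Adj i j → δ * m ≤ ((T.Cc i j).card : ℝ)) ∧
  (∀ i j, T.R.Adj i j →
    ColReg ε d (fun c => T.Ge c i j) (T.Vc i) (T.Vc j) (T.Cc i j))

/-- `T` is a super `R`-template with parameters `(m, ε, d, δ)`. -/
def IsSuperParam (T : GTemplate V C r) (m ε d δ : ℝ) : Prop :=
  (∀ j, m ≤ ((T.Vc j).card : ℝ) ∧ ((T.Vc j).card : ℝ) ≤ m / δ) ∧
  (∀ i j, T.R.Adj i j → δ * m ≤ ((T.Cc i j).card : ℝ)) ∧
  (∀ i j, T.R.Adj i j →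
    ColSuperReg ε d (fun c => T.Ge c i j) (T.Vc i) (T.Vc j) (T.Cc i j))

/-- `T` is a half-super `R`-template with parameters `(m, ε, d, δ)`. -/
def IsHalfSuperParam (T : GTemplate V C r) (m ε d δ : ℝ) : Prop :=
  (∀ j, m ≤ ((T.Vc j).card : ℝ) ∧ ((T.Vc j).card : ℝ) ≤ m / δ) ∧
  (∀ i j, T.R.Adj i j → δ * m ≤ ((T.Cc i j).card : ℝ)) ∧
  (∀ i j, T.R.Adj i j →
    ColHalfSuperReg ε d (fun c => T.Ge c i j) (T.Vc i) (T.Vc j) (T.Cc i j))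

/-- `T` is a semi-super `R`-template with parameters `(m, ε, d, δ)`. -/
def IsSemiSuperParam (T : GTemplate V C r) (m ε d δ : ℝ) : Prop :=
  T.IsParam m ε d δ ∧
  ∀ i j, T.R.Adj i j →
    (∀ v ∈ T.Vc i, d * ((T.Vc j).card : ℝ) * ((T.Cc i j).card : ℝ) ≤
      ∑ c ∈ T.Cc i j, (degIn (T.Ge c i j) v (T.Vc j) : ℝ)) ∧
    (∀ v ∈ T.Vc j, d * ((T.Vc i).card : ℝ) * ((T.Cc i j).card : ℝ) ≤
      ∑ c ∈ T.Cc i j, (degIn (T.Ge c i j) v (T.Vc i) : ℝ))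

/-- The template is rainbow: the colour clusters are pairwise disjoint. -/
def Rainbow (T : GTemplate V C r) : Prop :=
  ∀ i j k l, T.R.Adj i j → T.R.Adj k l → s(i, j) ≠ s(k, l) →
    Disjoint (T.Cc i j) (T.Cc k l)

/-- Adjacency in the `l`-thick graph of the template, between clusters `i` and `j`. -/
def ThickAdj (T : GTemplate V C r) (l : ℝ) (i j : Fin r) (x y : V) : Prop :=
  l * ((T.Cc i j).card : ℝ) ≤
    (((T.Cc i j).filter (fun c => (T.Ge c i j).Adj x y)).card : ℝ)

end GTemplate

/-! ## Auxiliary lemmas -/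

lemma thick_count {α C : Type*} (D : Finset C) (P : Finset α)
    (Q : C → α → Prop) (lam : ℝ) (hl : 0 ≤ lam) :
    ∑ p ∈ P, ((D.filter (fun c => Q c p)).card : ℝ) ≤
      ((P.filter (fun p => lam * (D.card : ℝ) ≤
          ((D.filter (fun c => Q c p)).card : ℝ))).card : ℝ) * (D.card : ℝ)
        + lam * (D.card : ℝ) * (P.card : ℝ) := by
  classical
  set f : α → ℝ := fun p => ((D.filter (fun c => Q c p)).card : ℝ) with hf
  set pr : α → Prop := fun p => lam * (D.card : ℝ) ≤ f p with hpr
  have hsplit : ∑ p ∈ P, f p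
      = ∑ p ∈ P.filter pr, f p + ∑ p ∈ P.filter (fun p => ¬ pr p), f p :=
    (Finset.sum_filter_add_sum_filter_not P pr f).symm
  have h1 : ∑ p ∈ P.filter pr, f p ≤ ((P.filter pr).card : ℝ) * (D.card : ℝ) := by
    calc ∑ p ∈ P.filter pr, f p ≤ ∑ _p ∈ P.filter pr, (D.card : ℝ) := by
          apply Finset.sum_le_sum
          intro p _
          show ((D.filter (fun c => Q c p)).card : ℝ) ≤ (D.card : ℝ)
          exact_mod_cast Finset.card_filter_le D _
      _ = _ := by rw [Finset.sum_const, nsmul_eq_mul]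
  have h2 : ∑ p ∈ P.filter (fun p => ¬ pr p), f p ≤ lam * (D.card : ℝ) * (P.card : ℝ) := by
    calc ∑ p ∈ P.filter (fun p => ¬ pr p), f p
        ≤ ∑ _p ∈ P.filter (fun p => ¬ pr p), lam * (D.card : ℝ) := by
          apply Finset.sum_le_sum
          intro p hp
          exact le_of_not_ge (Finset.mem_filter.1 hp).2
      _ = ((P.filter (fun p => ¬ pr p)).card : ℝ) * (lam * (D.card : ℝ)) := by
          rw [Finset.sum_const, nsmul_eq_mul]
      _ ≤ (P.card : ℝ) * (lam * (D.card : ℝ)) := by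
          apply mul_le_mul_of_nonneg_right
          · exact_mod_cast Finset.card_filter_le P _
          · positivity
      _ = lam * (D.card : ℝ) * (P.card : ℝ) := by ring
  rw [hsplit]
  linarith

lemma arith1 (d ε lam a u1 u2 s sig : ℝ) (ha : 0 < a) (hu1 : 0 < u1) (hu2 : 0 < u2)
    (hε : ε ≤ d / 4) (hlam : lam ≤ d / 4)
    (hsum : (d - ε) * (a * u1 * u2) ≤ sig)
    (hcnt : sig ≤ s * a + lam * a * (u1 * u2)) : d / 2 * u1 * u2 ≤ s := by
  nlinarith [mul_pos (mul_pos ha hu1) hu2, mul_pos hu1 hu2]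

lemma arith2 (d lam a v s sig : ℝ) (ha : 0 < a) (hv : 0 < v)
    (hlam : lam ≤ d / 4) (hd : 0 < d)
    (hsum : d * v * a ≤ sig)
    (hcnt : sig ≤ s * a + lam * a * v) : d / 2 * v ≤ s := by
  nlinarith [mul_pos ha hv]

lemma swap_pair {V C : Type*} (G : C → SimpleGraph V) (D : Finset C) (U₁ U₂ : Finset V) :
    ∑ c ∈ D, (pairCount (G c) U₁ U₂ : ℝ)
      = ∑ p ∈ U₁ ×ˢ U₂, ((D.filter (fun c => (G c).Adj p.1 p.2)).card : ℝ) := by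
  classical
  have h : ∑ c ∈ D, pairCount (G c) U₁ U₂
      = ∑ p ∈ U₁ ×ˢ U₂, (D.filter (fun c => (G c).Adj p.1 p.2)).card := by
    simp only [pairCount, Finset.card_filter]
    exact Finset.sum_comm
  exact_mod_cast h

lemma swap_deg {V C : Type*} (G : C → SimpleGraph V) (D : Finset C) (v : V) (U : Finset V) :
    ∑ c ∈ D, (degIn (G c) v U : ℝ)
      = ∑ y ∈ U, ((D.filter (fun c => (G c).Adj v y)).card : ℝ) := by
  classical
  have h : ∑ c ∈ D, degIn (G c) v U
      = ∑ y ∈ U, (D.filter (fun c => (G c).Adj v y)).card := by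
    simp only [degIn, Finset.card_filter]
    exact Finset.sum_comm
  exact_mod_cast h

/-! ## Statement 12 -/

theorem stmt12 (r : ℕ) (hr : 2 ≤ r) (d δ : ℝ) (hd : 0 < d) (hδ : 0 < δ) :
    ∃ lam₀ : ℝ, 0 < lam₀ ∧ ∀ lam : ℝ, 0 < lam → lam ≤ lam₀ →
    ∃ (ε₀ : ℝ) (m₀ : ℕ), 0 < ε₀ ∧
    ∀ ε : ℝ, 0 < ε → ε ≤ ε₀ → ∀ m : ℕ, m₀ ≤ m →
    ∀ (V : Type) (C : Type) (T : GTemplate V C r),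
      T.IsSemiSuperParam (m : ℝ) ε d δ →
      ∀ i j, T.R.Adj i j →
        BipHalfSuper ε (d / 2) (T.ThickAdj lam i j) (T.Vc i) (T.Vc j) := by
  refine ⟨d / 4, by positivity, ?_⟩
  intro lam hlam hlamle
  refine ⟨min (d / 4) 1, 1, by positivity, ?_⟩
  intro ε hε hεle m hm V C T hT i j hij
  obtain ⟨⟨hV, hC, hReg⟩, hSemi⟩ := hT
  obtain ⟨hdense, hreg⟩ := hReg i j hij
  obtain ⟨hdeg1, hdeg2⟩ := hSemi i j hij
  set V₁ := T.Vc i with hV₁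
  set V₂ := T.Vc j with hV₂
  set D := T.Cc i j with hD
  set G : C → SimpleGraph V := fun c => T.Ge c i j with hG
  have hm1 : (1 : ℝ) ≤ (m : ℝ) := by exact_mod_cast hm
  have hV1pos : (0 : ℝ) < (V₁.card : ℝ) := lt_of_lt_of_le (by linarith) (hV i).1
  have hV2pos : (0 : ℝ) < (V₂.card : ℝ) := lt_of_lt_of_le (by linarith) (hV j).1
  have hDpos : (0 : ℝ) < (D.card : ℝ) := by
    have := hC i j hij
    nlinarith
  have hε1 : ε ≤ 1 := le_trans hεle (min_le_right _ _)
  have hεd : ε ≤ d / 4 := le_trans hεle (min_le_left _ _)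
  have hlam0 : (0 : ℝ) ≤ lam := le_of_lt hlam
  refine ⟨?_, ?_, ?_⟩
  · -- pair counts
    intro U₁ hU₁ U₂ hU₂ h1 h2
    have hU1pos : (0 : ℝ) < (U₁.card : ℝ) :=
      lt_of_lt_of_le (by positivity) h1
    have hU2pos : (0 : ℝ) < (U₂.card : ℝ) :=
      lt_of_lt_of_le (by positivity) h2
    have hDD : ε * (D.card : ℝ) ≤ (D.card : ℝ) := by nlinarith
    have hclose := hreg U₁ hU₁ U₂ hU₂ D subset_rfl h1 h2 hDD
    have hlow : d - ε ≤ colDensity G U₁ U₂ D := by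
      have := abs_lt.1 hclose
      have hd2 : d ≤ colDensity G V₁ V₂ D := hdense
      linarith [this.1]
    have hsum : (d - ε) * ((D.card : ℝ) * (U₁.card : ℝ) * (U₂.card : ℝ)) ≤
        ∑ c ∈ D, (pairCount (G c) U₁ U₂ : ℝ) := by
      have hden : (0 : ℝ) < (D.card : ℝ) * (U₁.card : ℝ) * (U₂.card : ℝ) := by positivity
      have heq : colDensity G U₁ U₂ D * ((D.card : ℝ) * (U₁.card : ℝ) * (U₂.card : ℝ))
          = ∑ c ∈ D, (pairCount (G c) U₁ U₂ : ℝ) := by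
        rw [colDensity, div_mul_cancel₀]
        exact ne_of_gt hden
      rw [← heq]
      exact mul_le_mul_of_nonneg_right hlow (le_of_lt hden)
    have hcnt := thick_count D (U₁ ×ˢ U₂) (fun c p => (G c).Adj p.1 p.2) lam hlam0
    rw [← swap_pair] at hcnt
    have hcard : ((U₁ ×ˢ U₂).card : ℝ) = (U₁.card : ℝ) * (U₂.card : ℝ) := by
      rw [Finset.card_product]; push_cast; ring
    rw [hcard] at hcnt
    have hfilter_eq : ((U₁ ×ˢ U₂).filter (fun p => lam * (D.card : ℝ) ≤
          ((D.filter (fun c => (G c).Adj p.1 p.2)).card : ℝ)))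
        = ((U₁ ×ˢ U₂).filter (fun p => T.ThickAdj lam i j p.1 p.2)) := rfl
    rw [hfilter_eq] at hcnt
    set S := ((U₁ ×ˢ U₂).filter (fun p => T.ThickAdj lam i j p.1 p.2))
    have final := arith1 d ε lam (D.card : ℝ) (U₁.card : ℝ) (U₂.card : ℝ)
      (S.card : ℝ) (∑ c ∈ D, (pairCount (G c) U₁ U₂ : ℝ)) hDpos hU1pos hU2pos
      hεd hlamle (by linarith [hsum]) (by linarith [hcnt])
    linarith [final]
  · -- degrees from V₁
    intro x hx
    have hsum := hdeg1 x hx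
    have hcnt := thick_count D V₂ (fun c y => (T.Ge c i j).Adj x y) lam hlam0
    rw [← swap_deg] at hcnt
    have hcnt' : ∑ c ∈ D, (degIn (T.Ge c i j) x V₂ : ℝ) ≤
        ((V₂.filter (fun y => T.ThickAdj lam i j x y)).card : ℝ) * (D.card : ℝ)
          + lam * (D.card : ℝ) * (V₂.card : ℝ) := hcnt
    set S := V₂.filter (fun y => T.ThickAdj lam i j x y)
    have final := arith2 d lam (D.card : ℝ) (V₂.card : ℝ) (S.card : ℝ)
      (∑ c ∈ D, (degIn (T.Ge c i j) x V₂ : ℝ)) hDpos hV2pos hlamle hd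
      (by linarith [hsum]) (by linarith [hcnt'])
    linarith [final]
  · -- degrees from V₂
    intro y hy
    have hsum := hdeg2 y hy
    have hswap : ∑ c ∈ D, (degIn (T.Ge c i j) y V₁ : ℝ)
        = ∑ x ∈ V₁, ((D.filter (fun c => (T.Ge c i j).Adj x y)).card : ℝ) := by
      rw [swap_deg (fun c => T.Ge c i j) D y V₁]
      apply Finset.sum_congr rfl
      intro x _
      have hset : D.filter (fun c => (T.Ge c i j).Adj y x)
          = D.filter (fun c => (T.Ge c i j).Adj x y) := by
        ext c
        simp only [Finset.mem_filter]
        exact and_congr_right (fun _ => ⟨fun h => h.symm, fun h => h.symm⟩)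
      rw [hset]
    have hcnt := thick_count D V₁ (fun c x => (T.Ge c i j).Adj x y) lam hlam0
    rw [← hswap] at hcnt
    have hcnt' : ∑ c ∈ D, (degIn (T.Ge c i j) y V₁ : ℝ) ≤
        ((V₁.filter (fun x => T.ThickAdj lam i j x y)).card : ℝ) * (D.card : ℝ)
          + lam * (D.card : ℝ) * (V₁.card : ℝ) := hcnt
    set S := V₁.filter (fun x => T.ThickAdj lam i j x y)
    have final := arith2 d lam (D.card : ℝ) (V₁.card : ℝ) (S.card : ℝ)
      (∑ c ∈ D, (degIn (T.Ge c i j) y V₁ : ℝ)) hDpos hV1pos hlamle hd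
      (by linarith [hsum]) (by linarith [hcnt'])
    linarith [final]
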